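/- Let V be a finite-dimensional complex inner product space, ξ a self-adjoint endomorphism of V, and b an endomorphism of V. Assume b preserves the increasing eigen-filtration of ξ, i.e., P_μ ∘ b ∘ P_λ = 0 for every pair of eigenvalues λ < μ of ξ. Then exp(tξ) ∘ b ∘ exp(−tξ) converges as t → +∞ to b_∞ := Σ_λ P_λ ∘ b ∘ P_λ (sum over the eigenvalues λ of ξ); moreover b_∞ commutes with ξ and ‖b_∞‖ ≤ ‖b‖ in Hilbert–Schmidt norm. -/

import Mathlib

open scoped Topology

variable {V : Type*} [NormedAddCommGroup V] [InnerProductSpace ℂ V] [FiniteDimensional ℂ V]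

/-- The Hilbert–Schmidt norm `‖b‖ = √(tr (b ∘ b*))` on endomorphisms of a
finite-dimensional complex inner product space. -/
noncomputable def hsNorm (b : V →L[ℂ] V) : ℝ :=
  Real.sqrt (LinearMap.trace ℂ V
    ((b ∘L ContinuousLinearMap.adjoint b : V →L[ℂ] V) : V →ₗ[ℂ] V)).re

/-- The orthogonal projection onto the eigenspace `ker (ξ - λ·id)`, regarded as an
endomorphism of `V`. -/
noncomputable def eigProj (ξ : V →L[ℂ] V) (lam : ℝ) : V →L[ℂ] V :=
  (Module.End.eigenspace (ξ : V →ₗ[ℂ] V) (lam : ℂ)).subtypeL ∘L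
    Submodule.orthogonalProjectionOnto (Module.End.eigenspace (ξ : V →ₗ[ℂ] V) (lam : ℂ))

lemma eigProj_mem (ξ : V →L[ℂ] V) (lam : ℝ) (x : V) :
    eigProj ξ lam x ∈ Module.End.eigenspace (ξ : V →ₗ[ℂ] V) (lam : ℂ) := by
  exact SetLike.coe_mem _

lemma eigProj_apply_self (ξ : V →L[ℂ] V) (lam : ℝ) {x : V}
    (hx : x ∈ Module.End.eigenspace (ξ : V →ₗ[ℂ] V) (lam : ℂ)) : eigProj ξ lam x = x :=
  Submodule.starProjection_eq_self_iff.mpr hx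

lemma eigProj_apply_ortho (ξ : V →L[ℂ] V) (hξ : IsSelfAdjoint ξ) {lam mu : ℝ}
    (h : lam ≠ mu) {x : V}
    (hx : x ∈ Module.End.eigenspace (ξ : V →ₗ[ℂ] V) (mu : ℂ)) : eigProj ξ lam x = 0 := by
  have hfam := hξ.isSymmetric.orthogonalFamily_eigenspaces
  have hx' : x ∈ (Module.End.eigenspace (ξ : V →ₗ[ℂ] V) (lam : ℂ))ᗮ := by
    intro y hy
    exact hfam (by exact_mod_cast h) ⟨y, hy⟩ ⟨x, hx⟩
  show ((Submodule.orthogonalProjectionOnto _ x : _) : V) = 0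
  rw [Submodule.orthogonalProjectionOnto_apply_of_mem_orthogonal hx']
  rfl

lemma norm_eigProj_apply_le (ξ : V →L[ℂ] V) (lam : ℝ) (x : V) : ‖eigProj ξ lam x‖ ≤ ‖x‖ := by
  set K := Module.End.eigenspace (ξ : V →ₗ[ℂ] V) (lam : ℂ)
  have h1 : ‖eigProj ξ lam x‖ = ‖Submodule.orthogonalProjectionOnto K x‖ := by
    simp [eigProj]; rfl
  rw [h1]
  have := (Submodule.orthogonalProjectionOnto K).le_opNorm x
  have h2 := Submodule.orthogonalProjectionOnto_norm_le (K := K)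
  nlinarith [norm_nonneg x, norm_nonneg (Submodule.orthogonalProjectionOnto K x)]

lemma adjoint_eigProj (ξ : V →L[ℂ] V) (lam : ℝ) :
    ContinuousLinearMap.adjoint (eigProj ξ lam) = eigProj ξ lam :=
  (isSelfAdjoint_starProjection _)

lemma eigProj_comp_eigProj (ξ : V →L[ℂ] V) (hξ : IsSelfAdjoint ξ) (lam mu : ℝ) :
    eigProj ξ lam ∘L eigProj ξ mu = if lam = mu then eigProj ξ lam else 0 := by
  ext x
  by_cases h : lam = mu
  · subst h
    simp [ContinuousLinearMap.comp_apply,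
      eigProj_apply_self ξ lam (eigProj_mem ξ lam x)]
  · simp [ContinuousLinearMap.comp_apply, h,
      eigProj_apply_ortho ξ hξ h (eigProj_mem ξ mu x)]

lemma comp_eigProj (ξ : V →L[ℂ] V) (lam : ℝ) :
    ξ ∘L eigProj ξ lam = (lam : ℂ) • eigProj ξ lam := by
  ext x
  have := eigProj_mem ξ lam x
  rw [Module.End.mem_eigenspace_iff] at this
  simpa using this

lemma eigProj_comp (ξ : V →L[ℂ] V) (hξ : IsSelfAdjoint ξ) (lam : ℝ) :
    eigProj ξ lam ∘L ξ = (lam : ℂ) • eigProj ξ lam := by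
  have h := congrArg (ContinuousLinearMap.adjoint) (comp_eigProj ξ lam)
  rw [ContinuousLinearMap.adjoint_comp, adjoint_eigProj, hξ.adjoint_eq,
    LinearIsometryEquiv.map_smulₛₗ, adjoint_eigProj] at h
  rw [h]
  norm_num [Complex.conj_ofReal]

lemma exp_apply_eigen (A : V →L[ℂ] V) (c : ℂ) {x : V} (hx : A x = c • x) :
    NormedSpace.exp A x = Complex.exp c • x := by
  have hpow : ∀ n : ℕ, (A ^ n) x = c ^ n • x := by
    intro n
    induction n with
    | zero => simp
    | succ n ih =>
      rw [pow_succ, ContinuousLinearMap.mul_apply, hx, map_smul, ih, smul_smul, mul_comm, ← pow_succ]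
  have hsum := NormedSpace.expSeries_summable' (𝕂 := ℂ) A
  have happ : NormedSpace.exp A x = ∑' n : ℕ, ((n.factorial : ℂ)⁻¹ • A ^ n) x := by
    rw [NormedSpace.exp_eq_tsum ℂ]
    exact ((ContinuousLinearMap.apply ℂ V x).map_tsum hsum).symm ▸ rfl
  rw [happ]
  have : ∀ n : ℕ, ((n.factorial : ℂ)⁻¹ • A ^ n) x = ((n.factorial : ℂ)⁻¹ * c ^ n) • x := by
    intro n
    rw [ContinuousLinearMap.smul_apply, hpow, smul_smul]
  rw [tsum_congr this, Summable.tsum_smul_const ?_]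
  · congr 1
    rw [Complex.exp_eq_exp_ℂ, NormedSpace.exp_eq_tsum ℂ]
    exact tsum_congr fun n => by rw [smul_eq_mul]
  · simpa [smul_eq_mul] using NormedSpace.expSeries_summable' (𝕂 := ℂ) c

lemma sum_eigProj (ξ : V →L[ℂ] V) (hξ : IsSelfAdjoint ξ) (S : Finset ℝ)
    (hS : ∀ lam : ℝ, lam ∈ S ↔ Module.End.HasEigenvalue (ξ : V →ₗ[ℂ] V) (lam : ℂ)) :
    ∑ lam ∈ S, eigProj ξ lam = 1 := by
  have hsym := hξ.isSymmetric
  set n := Module.finrank ℂ V with hn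
  have e := hsym.eigenvectorBasis hn.symm
  apply ContinuousLinearMap.coe_injective
  apply Module.Basis.ext (hsym.eigenvectorBasis hn.symm).toBasis
  intro i
  have hvec := hsym.hasEigenvector_eigenvectorBasis hn.symm i
  have hmem : (hsym.eigenvectorBasis hn.symm) i ∈
      Module.End.eigenspace (ξ : V →ₗ[ℂ] V) ((hsym.eigenvalues hn.symm i : ℝ) : ℂ) := hvec.1
  have hval : hsym.eigenvalues hn.symm i ∈ S :=
    (hS _).mpr (hsym.hasEigenvalue_eigenvalues hn.symm i)
  simp only [OrthonormalBasis.coe_toBasis, ContinuousLinearMap.coe_sum', Finset.sum_apply,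
    ContinuousLinearMap.coe_coe, ContinuousLinearMap.one_apply]
  rw [Finset.sum_eq_single (hsym.eigenvalues hn.symm i)]
  · exact eigProj_apply_self ξ _ hmem
  · intro lam _ hne
    exact eigProj_apply_ortho ξ hξ hne hmem
  · intro h; exact absurd hval h

lemma exp_smul_comp_eigProj (ξ : V →L[ℂ] V) (t : ℝ) (lam : ℝ) :
    NormedSpace.exp (t • ξ) ∘L eigProj ξ lam
      = Complex.exp (t * lam) • eigProj ξ lam := by
  ext x
  have hmem := eigProj_mem ξ lam x
  rw [Module.End.mem_eigenspace_iff] at hmem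
  have hx : (t • ξ) (eigProj ξ lam x) = ((t : ℂ) * lam) • eigProj ξ lam x := by
    rw [ContinuousLinearMap.smul_apply]
    show t • (ξ (eigProj ξ lam x)) = _
    rw [show ξ (eigProj ξ lam x) = (lam : ℂ) • eigProj ξ lam x from hmem]
    rw [RCLike.real_smul_eq_coe_smul (K := ℂ), smul_smul]
    norm_num
  simpa using exp_apply_eigen (t • ξ) ((t : ℂ) * lam) hx

lemma exp_smul_eq_sum (ξ : V →L[ℂ] V) (hξ : IsSelfAdjoint ξ) (S : Finset ℝ)
    (hS : ∀ lam : ℝ, lam ∈ S ↔ Module.End.HasEigenvalue (ξ : V →ₗ[ℂ] V) (lam : ℂ)) (t : ℝ) :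
    NormedSpace.exp (t • ξ)
      = ∑ lam ∈ S, Complex.exp (t * lam) • eigProj ξ lam := by
  have h1 : NormedSpace.exp (t • ξ) = NormedSpace.exp (t • ξ) ∘L ∑ lam ∈ S, eigProj ξ lam := by
    rw [sum_eigProj ξ hξ S hS]; rfl
  rw [h1, ContinuousLinearMap.comp_finset_sum]
  exact Finset.sum_congr rfl fun lam _ => exp_smul_comp_eigProj ξ t lam

lemma conj_eq_sum (ξ : V →L[ℂ] V) (hξ : IsSelfAdjoint ξ) (b : V →L[ℂ] V) (S : Finset ℝ)
    (hS : ∀ lam : ℝ, lam ∈ S ↔ Module.End.HasEigenvalue (ξ : V →ₗ[ℂ] V) (lam : ℂ)) (t : ℝ) :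
    NormedSpace.exp (t • ξ) ∘L b ∘L NormedSpace.exp (-(t • ξ))
      = ∑ mu ∈ S, ∑ lam ∈ S,
          (Complex.exp (t * mu) * Complex.exp ((-t : ℝ) * lam)) •
            (eigProj ξ mu ∘L b ∘L eigProj ξ lam) := by
  have h2 : -(t • ξ) = (-t) • ξ := by rw [neg_smul]
  rw [h2, exp_smul_eq_sum ξ hξ S hS t, exp_smul_eq_sum ξ hξ S hS (-t)]
  rw [ContinuousLinearMap.comp_finset_sum, ContinuousLinearMap.finset_sum_comp]
  refine Finset.sum_congr rfl fun mu _ => ?_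
  rw [ContinuousLinearMap.smul_comp, ContinuousLinearMap.comp_finset_sum,
    Finset.smul_sum]
  refine Finset.sum_congr rfl fun lam _ => ?_
  ext x
  simp [ContinuousLinearMap.comp_apply, map_smul, smul_smul]

lemma hsNorm_eq {ι : Type*} [Fintype ι] (e : OrthonormalBasis ι ℂ V) (c : V →L[ℂ] V) :
    hsNorm c = Real.sqrt (∑ i, ‖ContinuousLinearMap.adjoint c (e i)‖ ^ 2) := by
  classical
  unfold hsNorm
  congr 1
  rw [LinearMap.trace_eq_matrix_trace ℂ e.toBasis, Matrix.trace]
  have : ∀ i, (LinearMap.toMatrix e.toBasis e.toBasis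
      ((c ∘L ContinuousLinearMap.adjoint c : V →L[ℂ] V) : V →ₗ[ℂ] V)).diag i
      = (inner ℂ (e i) (c (ContinuousLinearMap.adjoint c (e i))) : ℂ) := by
    intro i
    rw [Matrix.diag_apply, LinearMap.toMatrix_apply, OrthonormalBasis.coe_toBasis_repr_apply,
      OrthonormalBasis.repr_apply_apply, OrthonormalBasis.coe_toBasis]
    rfl
  rw [Complex.re_sum]
  refine Finset.sum_congr rfl fun i _ => ?_
  rw [this i, ← ContinuousLinearMap.adjoint_inner_left c (ContinuousLinearMap.adjoint c (e i)) (e i)]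
  exact inner_self_eq_norm_sq (𝕜 := ℂ) _

theorem aux_tendsto (ξ : V →L[ℂ] V) (hξ : IsSelfAdjoint ξ)
    (b : V →L[ℂ] V)
    (hfil : ∀ lam mu : ℝ, Module.End.HasEigenvalue (ξ : V →ₗ[ℂ] V) (lam : ℂ) →
      Module.End.HasEigenvalue (ξ : V →ₗ[ℂ] V) (mu : ℂ) → lam < mu →
      eigProj ξ mu ∘L b ∘L eigProj ξ lam = 0)
    (S : Finset ℝ)
    (hS : ∀ lam : ℝ, lam ∈ S ↔ Module.End.HasEigenvalue (ξ : V →ₗ[ℂ] V) (lam : ℂ)) :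
    Filter.Tendsto
      (fun t : ℝ => NormedSpace.exp (t • ξ) ∘L b ∘L NormedSpace.exp (-(t • ξ)))
      Filter.atTop (𝓝 (∑ lam ∈ S, eigProj ξ lam ∘L b ∘L eigProj ξ lam)) := by
  classical
  have key : ∀ mu ∈ S, ∀ lam ∈ S, Filter.Tendsto
      (fun t : ℝ => (Complex.exp (t * mu) * Complex.exp ((-t : ℝ) * lam)) •
        (eigProj ξ mu ∘L b ∘L eigProj ξ lam)) Filter.atTop
      (𝓝 (if mu = lam then eigProj ξ mu ∘L b ∘L eigProj ξ lam else 0)) := by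
    intro mu hmu lam hlam
    rcases lt_trichotomy lam mu with h | h | h
    · have h0 : eigProj ξ mu ∘L b ∘L eigProj ξ lam = 0 :=
        hfil lam mu ((hS lam).mp hlam) ((hS mu).mp hmu) h
      rw [h0, if_neg (by rintro rfl; exact lt_irrefl _ h)]
      simpa [h0] using (tendsto_const_nhds :
        Filter.Tendsto (fun _ : ℝ => (0 : V →L[ℂ] V)) Filter.atTop _)
    · subst h
      have hone : ∀ t : ℝ, Complex.exp (t * lam) * Complex.exp ((-t : ℝ) * lam) = 1 := by
        intro t
        rw [← Complex.exp_add]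
        have : (t * lam : ℂ) + ((-t : ℝ) : ℂ) * (lam : ℂ) = 0 := by push_cast; ring
        rw [show ((t:ℂ) * (lam:ℂ) + ((-t : ℝ) : ℂ) * (lam : ℂ)) = 0 from this, Complex.exp_zero]
      simp only [hone, one_smul, if_pos rfl]
      exact tendsto_const_nhds
    · rw [if_neg (by rintro rfl; exact lt_irrefl _ h)]
      have h1 : Filter.Tendsto (fun t : ℝ => t * (mu - lam)) Filter.atTop Filter.atBot :=
        (Filter.tendsto_mul_const_atBot_of_neg (by linarith)).mpr Filter.tendsto_id
      have h2 := Real.tendsto_exp_atBot.comp h1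
      have h3 := (Complex.continuous_ofReal.tendsto 0).comp h2
      have hcoef : Filter.Tendsto
          (fun t : ℝ => Complex.exp (t * mu) * Complex.exp ((-t : ℝ) * lam))
          Filter.atTop (𝓝 0) := by
        have h4 : Filter.Tendsto
            (fun t : ℝ => Complex.exp (t * mu) * Complex.exp ((-t : ℝ) * lam))
            Filter.atTop (𝓝 ((0:ℝ):ℂ)) := by
          refine h3.congr fun t => ?_
          show ((Real.exp (t * (mu - lam)) : ℝ) : ℂ) = _
          rw [Complex.ofReal_exp, ← Complex.exp_add]
          congr 1
          push_cast
          ring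
        simpa using h4
      simpa using hcoef.smul_const (eigProj ξ mu ∘L b ∘L eigProj ξ lam)
  have hsum := tendsto_finset_sum S fun mu hmu =>
    tendsto_finset_sum S fun lam hlam => key mu hmu lam hlam
  have hlim : (∑ mu ∈ S, ∑ lam ∈ S,
      if mu = lam then eigProj ξ mu ∘L b ∘L eigProj ξ lam else 0)
      = ∑ lam ∈ S, eigProj ξ lam ∘L b ∘L eigProj ξ lam := by
    refine Finset.sum_congr rfl fun mu hmu => ?_
    rw [Finset.sum_ite_eq S mu fun lam => eigProj ξ mu ∘L b ∘L eigProj ξ lam, if_pos hmu]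
  rw [hlim] at hsum
  exact Filter.Tendsto.congr (fun t => (conj_eq_sum ξ hξ b S hS t).symm) hsum

lemma aux_commute (ξ : V →L[ℂ] V) (hξ : IsSelfAdjoint ξ) (b : V →L[ℂ] V) (S : Finset ℝ) :
    Commute (∑ lam ∈ S, eigProj ξ lam ∘L b ∘L eigProj ξ lam) ξ := by
  have hl : ∀ lam : ℝ, (eigProj ξ lam ∘L b ∘L eigProj ξ lam) * ξ
      = (lam : ℂ) • (eigProj ξ lam ∘L b ∘L eigProj ξ lam) := by
    intro lam
    ext x
    have h := congrArg (fun f : V →L[ℂ] V => f x) (eigProj_comp ξ hξ lam)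
    simp only [ContinuousLinearMap.comp_apply, ContinuousLinearMap.smul_apply] at h
    simp only [ContinuousLinearMap.mul_apply, ContinuousLinearMap.comp_apply,
      ContinuousLinearMap.smul_apply, h, map_smul]
  have hr : ∀ lam : ℝ, ξ * (eigProj ξ lam ∘L b ∘L eigProj ξ lam)
      = (lam : ℂ) • (eigProj ξ lam ∘L b ∘L eigProj ξ lam) := by
    intro lam
    ext x
    have h := congrArg (fun f : V →L[ℂ] V => f (b (eigProj ξ lam x))) (comp_eigProj ξ lam)
    simp only [ContinuousLinearMap.comp_apply, ContinuousLinearMap.smul_apply] at h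
    simp only [ContinuousLinearMap.mul_apply, ContinuousLinearMap.comp_apply,
      ContinuousLinearMap.smul_apply, h]
  show _ * _ = _ * _
  rw [Finset.sum_mul, Finset.mul_sum]
  exact Finset.sum_congr rfl fun lam _ => (hl lam).trans (hr lam).symm

lemma aux_norm (ξ : V →L[ℂ] V) (hξ : IsSelfAdjoint ξ) (b : V →L[ℂ] V) (S : Finset ℝ)
    (hS : ∀ lam : ℝ, lam ∈ S ↔ Module.End.HasEigenvalue (ξ : V →ₗ[ℂ] V) (lam : ℂ)) :
    hsNorm (∑ lam ∈ S, eigProj ξ lam ∘L b ∘L eigProj ξ lam) ≤ hsNorm b := by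
  classical
  have hsym := hξ.isSymmetric
  set n := Module.finrank ℂ V with hn
  set e := hsym.eigenvectorBasis hn.symm with he
  rw [hsNorm_eq e, hsNorm_eq e]
  apply Real.sqrt_le_sqrt
  apply Finset.sum_le_sum
  intro i _
  have hvec := hsym.hasEigenvector_eigenvectorBasis hn.symm i
  set ν := hsym.eigenvalues hn.symm i with hν
  have hmem : e i ∈ Module.End.eigenspace (ξ : V →ₗ[ℂ] V) ((ν : ℝ) : ℂ) := hvec.1
  have hνS : ν ∈ S := (hS ν).mpr (hsym.hasEigenvalue_eigenvalues hn.symm i)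
  have hadj : ContinuousLinearMap.adjoint (∑ lam ∈ S, eigProj ξ lam ∘L b ∘L eigProj ξ lam) (e i)
      = eigProj ξ ν (ContinuousLinearMap.adjoint b (e i)) := by
    rw [map_sum]
    have hterm : ∀ lam : ℝ,
        ContinuousLinearMap.adjoint (eigProj ξ lam ∘L b ∘L eigProj ξ lam)
          = eigProj ξ lam ∘L ContinuousLinearMap.adjoint b ∘L eigProj ξ lam := by
      intro lam
      rw [ContinuousLinearMap.adjoint_comp, ContinuousLinearMap.adjoint_comp,
        adjoint_eigProj, ContinuousLinearMap.comp_assoc]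
    rw [ContinuousLinearMap.sum_apply]
    rw [Finset.sum_eq_single ν]
    · rw [hterm ν]
      simp only [ContinuousLinearMap.comp_apply]
      rw [eigProj_apply_self ξ ν hmem]
    · intro lam _ hne
      rw [hterm lam]
      simp only [ContinuousLinearMap.comp_apply]
      rw [eigProj_apply_ortho ξ hξ hne hmem]
      simp
    · intro h; exact absurd hνS h
  rw [hadj]
  have := norm_eigProj_apply_le ξ ν (ContinuousLinearMap.adjoint b (e i))
  nlinarith [norm_nonneg (eigProj ξ ν (ContinuousLinearMap.adjoint b (e i))),
    norm_nonneg (ContinuousLinearMap.adjoint b (e i))]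

theorem tendsto_exp_conj_of_filtration (ξ : V →L[ℂ] V) (hξ : IsSelfAdjoint ξ)
    (b : V →L[ℂ] V)
    (hfil : ∀ lam mu : ℝ, Module.End.HasEigenvalue (ξ : V →ₗ[ℂ] V) (lam : ℂ) →
      Module.End.HasEigenvalue (ξ : V →ₗ[ℂ] V) (mu : ℂ) → lam < mu →
      eigProj ξ mu ∘L b ∘L eigProj ξ lam = 0)
    (S : Finset ℝ)
    (hS : ∀ lam : ℝ, lam ∈ S ↔ Module.End.HasEigenvalue (ξ : V →ₗ[ℂ] V) (lam : ℂ)) :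
    Filter.Tendsto
      (fun t : ℝ => NormedSpace.exp (t • ξ) ∘L b ∘L NormedSpace.exp (-(t • ξ)))
      Filter.atTop (𝓝 (∑ lam ∈ S, eigProj ξ lam ∘L b ∘L eigProj ξ lam)) ∧
    Commute (∑ lam ∈ S, eigProj ξ lam ∘L b ∘L eigProj ξ lam) ξ ∧
    hsNorm (∑ lam ∈ S, eigProj ξ lam ∘L b ∘L eigProj ξ lam) ≤ hsNorm b :=
  ⟨aux_tendsto ξ hξ b hfil S hS, aux_commute ξ hξ b S, aux_norm ξ hξ b S hS⟩
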